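/- arXiv:1603.06381 — 3 statements merged into one kernel-verified Lean document; each statement's English description precedes it below -/
import Mathlib

section
/- (Céa's lemma) If 𝓑 is bounded with constant M and coercive with constant K₂ > 0 on a Hilbert space V, u solves 𝓑(u,v) = F(v) for all v ∈ V, and u_ℓ ∈ V_ℓ solves the Galerkin problem on a closed subspace V_ℓ, then ‖u − u_ℓ‖ ≤ (M/K₂) inf_{v_ℓ ∈ V_ℓ} ‖u − v_ℓ‖. -/
open scoped RealInnerProductSpace

/-- Céa's lemma: if `𝓑` is bounded with constant `M` and coercive
with constant `K₂ > 0` on a Hilbert space `V`, `u` solves `𝓑(u, v) = F(v)` for all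
`v ∈ V`, and `u_ℓ ∈ V_ℓ` solves the Galerkin problem on a closed subspace `V_ℓ`,
then `‖u − u_ℓ‖ ≤ (M / K₂) inf_{v_ℓ ∈ V_ℓ} ‖u − v_ℓ‖`. -/
theorem cea_lemma
    {V : Type*} [NormedAddCommGroup V] [InnerProductSpace ℝ V] [CompleteSpace V]
    (𝓑 : V →ₗ[ℝ] V →ₗ[ℝ] ℝ) (M K₂ : ℝ) (hK₂ : 0 < K₂)
    (hcont : ∀ u v : V, |𝓑 u v| ≤ M * ‖u‖ * ‖v‖)
    (hcoer : ∀ u : V, K₂ * ‖u‖ ^ 2 ≤ 𝓑 u u)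
    (F : V →L[ℝ] ℝ)
    (Vl : Submodule ℝ V) (hVl : IsClosed (Vl : Set V))
    (u : V) (hu : ∀ v : V, 𝓑 u v = F v)
    (ul : V) (hul : ul ∈ Vl) (hGal : ∀ vl ∈ Vl, 𝓑 ul vl = F vl) :
    ‖u - ul‖ ≤ (M / K₂) * ⨅ vl : Vl, ‖u - (vl : V)‖ := by
  by_cases htriv : ∀ w : V, w = 0
  · have hu0 : u = 0 := htriv u
    have hul0 : ul = 0 := htriv ul
    have : (⨅ vl : Vl, ‖u - (vl : V)‖) = 0 := by
      have : ∀ vl : Vl, ‖u - (vl : V)‖ = 0 := by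
        intro vl; rw [hu0, htriv (vl : V)]; simp
      simp [this]
    rw [this, mul_zero]
    simp [hu0, hul0]
  · push_neg at htriv
    obtain ⟨w, hw⟩ := htriv
    have hwpos : 0 < ‖w‖ := norm_pos_iff.mpr hw
    have hM : 0 < M := by
      have h1 := hcoer w
      have h2 := (le_abs_self _).trans (hcont w w)
      have h3 : K₂ * ‖w‖ ^ 2 ≤ M * ‖w‖ ^ 2 := by nlinarith
      nlinarith [pow_pos hwpos 2]
    have key : ∀ vl ∈ Vl, ‖u - ul‖ ≤ (M / K₂) * ‖u - vl‖ := by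
      intro vl hvl
      have horth : 𝓑 (u - ul) (vl - ul) = 0 := by
        have h1 : 𝓑 u (vl - ul) = F (vl - ul) := hu _
        have h2 : 𝓑 ul (vl - ul) = F (vl - ul) :=
          hGal _ (Vl.sub_mem hvl hul)
        have e : 𝓑 (u - ul) (vl - ul) = 𝓑 u (vl - ul) - 𝓑 ul (vl - ul) := by
          simp [map_sub, LinearMap.sub_apply]; ring
        rw [e, h1, h2, sub_self]
      have hsplit : 𝓑 (u - ul) (u - ul) = 𝓑 (u - ul) (u - vl) := by
        have : (u - ul) = (u - vl) + (vl - ul) := by abel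
        nth_rewrite 2 [this]
        rw [map_add, horth, add_zero]
      have hineq : K₂ * ‖u - ul‖ ^ 2 ≤ M * ‖u - ul‖ * ‖u - vl‖ := by
        calc K₂ * ‖u - ul‖ ^ 2 ≤ 𝓑 (u - ul) (u - ul) := hcoer _
          _ = 𝓑 (u - ul) (u - vl) := hsplit
          _ ≤ |𝓑 (u - ul) (u - vl)| := le_abs_self _
          _ ≤ M * ‖u - ul‖ * ‖u - vl‖ := hcont _ _
      rcases eq_or_lt_of_le (norm_nonneg (u - ul)) with h0 | h0
      · rw [← h0]
        positivity
      · rw [div_mul_eq_mul_div, le_div_iff₀ hK₂]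
        nlinarith
    have hne : Nonempty Vl := ⟨⟨ul, hul⟩⟩
    rw [Real.mul_iInf_of_nonneg (by positivity)]
    exact le_ciInf fun vl => key _ vl.2
end

section
/- Suppose the multilevel rates hold with h_ℓ = M^{−ℓ} for M ≥ 2: V_ℓ ≤ C h_ℓ^β, cost C_ℓ ≤ C h_ℓ^{−ζ}, bias |η_L(φ) − η_∞(φ)| ≤ C h_L^α, with β > ζ and max{β,ζ} ≤ 2α. Then for any ε > 0 there exist L and sample sizes N_ℓ ∝ ε^{−2} h_ℓ^{(β+ζ)/2} such that the total cost ∑_{ℓ=0}^L N_ℓ C_ℓ is O(ε^{−2}) while ∑_{ℓ=0}^L V_ℓ/N_ℓ = O(ε²) and the squared bias is O(ε²). -/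
/-!
With `N_ℓ = ⌈ε⁻² h_ℓ^((β+ζ)/2)⌉` one gets `V_ℓ / N_ℓ ≤ C ε² h_ℓ^((β-ζ)/2)` and
`N_ℓ C_ℓ ≤ C (ε⁻² h_ℓ^((β-ζ)/2) + h_ℓ^(-ζ))`. Since `β > ζ`, the terms `h_ℓ^((β-ζ)/2)` form a
convergent geometric series, which gives the variance bound and the first half of the cost bound
uniformly in `L`. The finest level is chosen with `h_L` within a factor `M` of `ε^(1/α)`: then the
bias is at most `C ε`, and the increasing geometric series `∑ h_ℓ^(-ζ)` is a constant times its
last term `h_L^(-ζ) = O(ε^(-ζ/α)) = O(ε⁻²)`, because `ζ ≤ 2α`.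
-/

open Finset

noncomputable def meshSize (M : ℝ) (ℓ : ℕ) : ℝ := M ^ (-(ℓ : ℝ))

section Mesh

variable {M : ℝ}

lemma meshSize_pos (hM : 0 < M) (ℓ : ℕ) : 0 < meshSize M ℓ := Real.rpow_pos_of_pos hM _

lemma meshSize_rpow (hM : 0 ≤ M) (ℓ : ℕ) (c : ℝ) : meshSize M ℓ ^ c = (M ^ (-c)) ^ ℓ := by
  rw [meshSize, ← Real.rpow_natCast, ← Real.rpow_mul hM, ← Real.rpow_mul hM]
  ring_nf

lemma meshSize_eq_inv_pow (hM : 0 ≤ M) (ℓ : ℕ) : meshSize M ℓ = (M ^ ℓ)⁻¹ := by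
  rw [meshSize, Real.rpow_neg hM, Real.rpow_natCast]

lemma sum_meshSize_rpow_le (hM : 1 < M) {γ : ℝ} (hγ : 0 < γ) (n : ℕ) :
    ∑ ℓ ∈ range n, meshSize M ℓ ^ γ ≤ (1 - M ^ (-γ))⁻¹ := by
  have hr : M ^ (-γ) < 1 := Real.rpow_lt_one_of_one_lt_of_neg hM (neg_neg_of_pos hγ)
  have hsum := geom_sum_Ico_le_of_lt_one (m := 0) (n := n)
    (Real.rpow_nonneg (zero_lt_one.trans hM).le (-γ)) hr
  rw [← range_eq_Ico, pow_zero, one_div] at hsum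
  simpa only [meshSize_rpow (zero_lt_one.trans hM).le] using hsum

lemma sum_meshSize_rpow_neg_le (hM : 1 < M) {ζ : ℝ} (hζ : 0 < ζ) (L : ℕ) :
    ∑ ℓ ∈ range (L + 1), meshSize M ℓ ^ (-ζ) ≤
      M ^ ζ / (M ^ ζ - 1) * meshSize M L ^ (-ζ) := by
  have hM0 : 0 ≤ M := (zero_lt_one.trans hM).le
  have hs : 1 < M ^ ζ := Real.one_lt_rpow hM hζ
  simp_rw [meshSize_rpow hM0, neg_neg, geom_sum_eq hs.ne']
  rw [div_mul_eq_mul_div, ← pow_succ']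
  exact div_le_div_of_nonneg_right (by linarith) (by linarith)

lemma exists_meshSize_mem_Icc (hM : 1 < M) {δ : ℝ} (hδ0 : 0 < δ) (hδ1 : δ ≤ 1) :
    ∃ L : ℕ, meshSize M L ∈ Set.Icc (δ / M) δ := by
  have hM0 : 0 < M := zero_lt_one.trans hM
  obtain ⟨n, hn, hn'⟩ := exists_nat_pow_near (one_le_inv_iff₀.2 ⟨hδ0, hδ1⟩) hM
  refine ⟨n + 1, ?_, ?_⟩ <;> rw [meshSize_eq_inv_pow hM0.le]
  · rw [pow_succ, mul_inv, div_eq_mul_inv]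
    gcongr
    exact (le_inv_comm₀ hδ0 (pow_pos hM0 n)).2 hn
  · exact inv_le_of_inv_le₀ hδ0 hn'.le

lemma exists_meshSize_rpow_le (hM : 1 < M) {α ζ ε : ℝ} (hα : 0 < α) (hζ : 0 ≤ ζ)
    (hζα : ζ ≤ 2 * α) (hε0 : 0 < ε) (hε1 : ε ≤ 1) :
    ∃ L : ℕ, meshSize M L ^ α ≤ ε ∧ meshSize M L ^ (-ζ) ≤ M ^ ζ * ε ^ (-2 : ℝ) := by
  have hM0 : 0 < M := zero_lt_one.trans hM
  set δ := ε ^ α⁻¹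
  have hδ0 : 0 < δ := Real.rpow_pos_of_pos hε0 _
  obtain ⟨L, hlo, hhi⟩ :=
    exists_meshSize_mem_Icc hM hδ0 (Real.rpow_le_one hε0.le hε1 (inv_nonneg.2 hα.le))
  refine ⟨L, ?_, ?_⟩
  · calc meshSize M L ^ α ≤ δ ^ α := Real.rpow_le_rpow (meshSize_pos hM0 L).le hhi hα.le
      _ = ε := by rw [← Real.rpow_mul hε0.le, inv_mul_cancel₀ hα.ne', Real.rpow_one]
  · calc meshSize M L ^ (-ζ) ≤ (δ / M) ^ (-ζ) :=
          Real.rpow_le_rpow_of_nonpos (div_pos hδ0 hM0) hlo (neg_nonpos.2 hζ)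
      _ = M ^ ζ * ε ^ (-(ζ / α)) := by
          rw [Real.div_rpow hδ0.le hM0.le, ← Real.rpow_mul hε0.le, Real.rpow_neg hM0.le,
            div_inv_eq_mul, mul_comm, inv_mul_eq_div, neg_div]
      _ ≤ M ^ ζ * ε ^ (-2 : ℝ) := by
          refine mul_le_mul_of_nonneg_left ?_ (Real.rpow_nonneg hM0.le ζ)
          refine Real.rpow_le_rpow_of_exponent_ge hε0 hε1 (neg_le_neg ?_)
          rwa [div_le_iff₀ hα]

end Mesh

noncomputable def mlmcSampleSize (M e β ζ : ℝ) (ℓ : ℕ) : ℕ :=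
  ⌈e * meshSize M ℓ ^ ((β + ζ) / 2)⌉₊

section Estimator

variable {M Cc β ζ e : ℝ} {V Cost : ℕ → ℝ} {N : ℕ → ℕ}

lemma one_le_mlmcSampleSize (hM : 0 < M) (he : 0 < e) (ℓ : ℕ) :
    1 ≤ mlmcSampleSize M e β ζ ℓ :=
  Nat.one_le_ceil_iff.2 (mul_pos he (Real.rpow_pos_of_pos (meshSize_pos hM ℓ) _))

lemma le_mlmcSampleSize (ℓ : ℕ) :
    e * meshSize M ℓ ^ ((β + ζ) / 2) ≤ mlmcSampleSize M e β ζ ℓ :=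
  Nat.le_ceil _

lemma mlmcSampleSize_le (hM : 0 < M) (he : 0 ≤ e) (ℓ : ℕ) :
    (mlmcSampleSize M e β ζ ℓ : ℝ) ≤ e * meshSize M ℓ ^ ((β + ζ) / 2) + 1 :=
  (Nat.ceil_lt_add_one (mul_nonneg he (Real.rpow_nonneg (meshSize_pos hM ℓ).le _))).le

lemma sum_variance_div_le (hM : 1 < M) (hCc : 0 ≤ Cc) (hβζ : ζ < β) (he : 0 < e)
    (hV : ∀ ℓ, V ℓ ≤ Cc * meshSize M ℓ ^ β)
    (hN : ∀ ℓ, e * meshSize M ℓ ^ ((β + ζ) / 2) ≤ N ℓ) (n : ℕ) :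
    ∑ ℓ ∈ range n, V ℓ / N ℓ ≤ Cc * (1 - M ^ (-((β - ζ) / 2)))⁻¹ / e := by
  have hM0 : 0 < M := zero_lt_one.trans hM
  calc ∑ ℓ ∈ range n, V ℓ / N ℓ
      ≤ ∑ ℓ ∈ range n, Cc / e * meshSize M ℓ ^ ((β - ζ) / 2) := by
        refine sum_le_sum fun ℓ _ => ?_
        have hh := meshSize_pos hM0 ℓ
        calc V ℓ / N ℓ ≤ Cc * meshSize M ℓ ^ β / (e * meshSize M ℓ ^ ((β + ζ) / 2)) :=
              div_le_div₀ (by positivity) (hV ℓ) (by positivity) (hN ℓ)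
          _ = Cc / e * meshSize M ℓ ^ ((β - ζ) / 2) := by
              rw [show (β - ζ) / 2 = β - (β + ζ) / 2 by ring, Real.rpow_sub hh]
              field_simp
    _ = Cc / e * ∑ ℓ ∈ range n, meshSize M ℓ ^ ((β - ζ) / 2) := (mul_sum ..).symm
    _ ≤ Cc / e * (1 - M ^ (-((β - ζ) / 2)))⁻¹ := by
        gcongr
        exact sum_meshSize_rpow_le hM (by linarith) n
    _ = Cc * (1 - M ^ (-((β - ζ) / 2)))⁻¹ / e := by ring

lemma sum_samples_mul_cost_le (hM : 1 < M) (hCc : 0 ≤ Cc) (hζ : 0 < ζ) (hβζ : ζ < β)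
    (he : 0 ≤ e) (hCost : ∀ ℓ, Cost ℓ ≤ Cc * meshSize M ℓ ^ (-ζ))
    (hN : ∀ ℓ, (N ℓ : ℝ) ≤ e * meshSize M ℓ ^ ((β + ζ) / 2) + 1) {L : ℕ} {c : ℝ}
    (hL : meshSize M L ^ (-ζ) ≤ c * e) :
    ∑ ℓ ∈ range (L + 1), N ℓ * Cost ℓ ≤
      Cc * ((1 - M ^ (-((β - ζ) / 2)))⁻¹ + M ^ ζ / (M ^ ζ - 1) * c) * e := by
  have hM0 : 0 < M := zero_lt_one.trans hM
  have hs : 0 < M ^ ζ - 1 := sub_pos.2 (Real.one_lt_rpow hM hζ)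
  calc ∑ ℓ ∈ range (L + 1), N ℓ * Cost ℓ
      ≤ ∑ ℓ ∈ range (L + 1),
          Cc * (e * meshSize M ℓ ^ ((β - ζ) / 2) + meshSize M ℓ ^ (-ζ)) := by
        refine sum_le_sum fun ℓ _ => ?_
        have hh := meshSize_pos hM0 ℓ
        calc N ℓ * Cost ℓ ≤ N ℓ * (Cc * meshSize M ℓ ^ (-ζ)) := by gcongr; exact hCost ℓ
          _ ≤ (e * meshSize M ℓ ^ ((β + ζ) / 2) + 1) * (Cc * meshSize M ℓ ^ (-ζ)) := by
              gcongr; exact hN ℓ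
          _ = Cc * (e * meshSize M ℓ ^ ((β - ζ) / 2) + meshSize M ℓ ^ (-ζ)) := by
              rw [show (β - ζ) / 2 = (β + ζ) / 2 + -ζ by ring, Real.rpow_add hh]
              ring
    _ = Cc * (e * ∑ ℓ ∈ range (L + 1), meshSize M ℓ ^ ((β - ζ) / 2) +
          ∑ ℓ ∈ range (L + 1), meshSize M ℓ ^ (-ζ)) := by
        rw [← mul_sum, sum_add_distrib, mul_sum]
    _ ≤ Cc * (e * (1 - M ^ (-((β - ζ) / 2)))⁻¹ + M ^ ζ / (M ^ ζ - 1) * (c * e)) := by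
        gcongr
        · exact sum_meshSize_rpow_le hM (by linarith) _
        · exact (sum_meshSize_rpow_neg_le hM hζ L).trans (by gcongr)
    _ = _ := by ring

end Estimator

theorem mlmc_complexity_general
    (Cc α β ζ : ℝ) (M : ℕ) (hM : 2 ≤ M)
    (hCc : 0 < Cc) (hα : 0 < α) (hζ : 0 < ζ) (hβζ : ζ < β)
    (h2α : max β ζ ≤ 2 * α)
    (V Cost bias : ℕ → ℝ)
    (hV : ∀ ℓ : ℕ, V ℓ ≤ Cc * ((M : ℝ) ^ (-(ℓ : ℝ))) ^ β)
    (hCost : ∀ ℓ : ℕ, Cost ℓ ≤ Cc * ((M : ℝ) ^ (-(ℓ : ℝ))) ^ (-ζ))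
    (hbias : ∀ L : ℕ, |bias L| ≤ Cc * ((M : ℝ) ^ (-(L : ℝ))) ^ α) :
    ∃ C' : ℝ, 0 < C' ∧ ∀ ε : ℝ, 0 < ε → ε ≤ 1 →
      ∃ (L : ℕ) (N : ℕ → ℕ),
        (∀ ℓ ≤ L, 1 ≤ N ℓ ∧
          (N ℓ : ℝ) ≤ C' * (ε ^ (-2 : ℝ) * ((M : ℝ) ^ (-(ℓ : ℝ))) ^ ((β + ζ) / 2) + 1)) ∧
        (∑ ℓ ∈ range (L + 1), (N ℓ : ℝ) * Cost ℓ ≤ C' * ε ^ (-2 : ℝ)) ∧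
        (∑ ℓ ∈ range (L + 1), V ℓ / (N ℓ : ℝ) ≤ C' * ε ^ 2) ∧
        bias L ^ 2 ≤ C' * ε ^ 2 := by
  have hM1 : (1 : ℝ) < M := by exact_mod_cast hM
  have hM0 : (0 : ℝ) < M := zero_lt_one.trans hM1
  set K := (1 - (M : ℝ) ^ (-((β - ζ) / 2)))⁻¹
  set D := (M : ℝ) ^ ζ / ((M : ℝ) ^ ζ - 1) * (M : ℝ) ^ ζ
  have hK : 0 < K := inv_pos.2 (sub_pos.2 (Real.rpow_lt_one_of_one_lt_of_neg hM1 (by linarith)))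
  have hD : 0 < D := by
    have : 0 < (M : ℝ) ^ ζ - 1 := sub_pos.2 (Real.one_lt_rpow hM1 hζ)
    positivity
  set C' := 1 + Cc * (K + D) + Cc ^ 2
  have hCKD : 0 < Cc * (K + D) := by positivity
  refine ⟨C', by positivity, fun ε hε0 hε1 => ?_⟩
  obtain ⟨L, hbiasL, hcostL⟩ :=
    exists_meshSize_rpow_le hM1 hα hζ.le ((le_max_right β ζ).trans h2α) hε0 hε1
  set e := ε ^ (-2 : ℝ)
  have he : 0 < e := Real.rpow_pos_of_pos hε0 _
  refine ⟨L, mlmcSampleSize M e β ζ, fun ℓ _ => ⟨one_le_mlmcSampleSize hM0 he ℓ, ?_⟩, ?_, ?_, ?_⟩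
  · have hN := mlmcSampleSize_le (β := β) (ζ := ζ) hM0 he.le ℓ
    exact hN.trans (le_mul_of_one_le_left ((Nat.cast_nonneg _).trans hN) (by nlinarith))
  · calc _ ≤ Cc * (K + D) * e :=
          sum_samples_mul_cost_le hM1 hCc.le hζ hβζ he.le hCost
            (mlmcSampleSize_le hM0 he.le) hcostL
      _ ≤ C' * e := by gcongr; nlinarith
  · have he_inv : e⁻¹ = ε ^ 2 := by
      rw [show e = (ε ^ (2 : ℝ))⁻¹ from Real.rpow_neg hε0.le 2, inv_inv, Real.rpow_two]
    calc _ ≤ Cc * K / e := sum_variance_div_le hM1 hCc.le hβζ he hV le_mlmcSampleSize (L + 1)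
      _ = Cc * K * ε ^ 2 := by rw [div_eq_mul_inv, he_inv]
      _ ≤ C' * ε ^ 2 := by gcongr; nlinarith
  · calc bias L ^ 2 = |bias L| ^ 2 := (sq_abs _).symm
      _ ≤ (Cc * ε) ^ 2 := by
          gcongr
          exact (hbias L).trans (mul_le_mul_of_nonneg_left hbiasL hCc.le)
      _ = Cc ^ 2 * ε ^ 2 := mul_pow ..
      _ ≤ C' * ε ^ 2 := by gcongr; nlinarith

/-- multilevel complexity in the regime `β > ζ`.
With `h_ℓ = M^{−ℓ}` (`M ≥ 2`), variance rate `V_ℓ ≤ C h_ℓ^β`, cost `C_ℓ ≤ C h_ℓ^{−ζ}`,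
bias `|bias_L| ≤ C h_L^α`, with `β > ζ` and `max{β, ζ} ≤ 2α`: for any `0 < ε ≤ 1`
there exist `L` and sample sizes `N_ℓ ∝ ε^{−2} h_ℓ^{(β+ζ)/2}` such that the total
cost `∑ N_ℓ C_ℓ` is `O(ε^{−2})`, while `∑ V_ℓ / N_ℓ = O(ε²)` and the squared bias
is `O(ε²)`. -/
theorem mlmc_complexity
    (Cc α β ζ : ℝ) (M : ℕ) (hM : 2 ≤ M)
    (hCc : 0 < Cc) (hα : 0 < α) (hζ : 0 < ζ) (hβζ : ζ < β)
    (h2α : max β ζ ≤ 2 * α)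
    (V Cost bias : ℕ → ℝ)
    (hVnonneg : ∀ ℓ, 0 ≤ V ℓ)
    (hV : ∀ ℓ : ℕ, V ℓ ≤ Cc * ((M : ℝ) ^ (-(ℓ : ℝ))) ^ β)
    (hCostpos : ∀ ℓ, 0 < Cost ℓ)
    (hCost : ∀ ℓ : ℕ, Cost ℓ ≤ Cc * ((M : ℝ) ^ (-(ℓ : ℝ))) ^ (-ζ))
    (hbias : ∀ L : ℕ, |bias L| ≤ Cc * ((M : ℝ) ^ (-(L : ℝ))) ^ α) :
    ∃ C' : ℝ, 0 < C' ∧ ∀ ε : ℝ, 0 < ε → ε ≤ 1 →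
      ∃ (L : ℕ) (N : ℕ → ℕ),
        (∀ ℓ ≤ L, 1 ≤ N ℓ ∧
          (N ℓ : ℝ) ≤ C' * (ε ^ (-2 : ℝ) * ((M : ℝ) ^ (-(ℓ : ℝ))) ^ ((β + ζ) / 2) + 1)) ∧
        (∑ ℓ ∈ range (L + 1), (N ℓ : ℝ) * Cost ℓ ≤ C' * ε ^ (-2 : ℝ)) ∧
        (∑ ℓ ∈ range (L + 1), V ℓ / (N ℓ : ℝ) ≤ C' * ε ^ 2) ∧
        bias L ^ 2 ≤ C' * ε ^ 2 :=
  mlmc_complexity_general Cc α β ζ M hM hCc hα hζ hβζ h2α V Cost bias hV hCost hbias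
end

section
/- Suppose G : E → ℝ satisfies 0 < c ≤ G(λ) ≤ C for all λ. Then for any two probability measures μ, ν on E, the normalized reweighting maps Ψ(μ)(A) = μ(G 1_A)/μ(G) satisfy ‖Ψ(μ) − Ψ(ν)‖_TV ≤ (C/c) ‖μ − ν‖_TV. -/
/-!
Write `a = μ G`, `b = ν G`, `p = μ (G 1_A)`, `q = ν (G 1_A)` and `t = p / a ∈ [0, 1]`. The function
`f = G 1_A + t (C - G)` takes values in `[0, C]`, and since `μ (G 1_A - t G) = 0`,
`Ψ(μ)(A) - Ψ(ν)(A) = p / a - q / b = (μ f - ν f) / b`. By the layer-cake formula,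
`μ f - ν f = ∫₀^C (μ {f ≥ s} - ν {f ≥ s}) ds ≤ C ‖μ - ν‖_TV`, and `b ≥ c`.
-/

open MeasureTheory

noncomputable def tvDist {E : Type*} [MeasurableSpace E] (μ ν : Measure E) : ℝ :=
  ⨆ (A : Set E) (_ : MeasurableSet A), |(μ A).toReal - (ν A).toReal|

noncomputable def boltzmannGibbs {E : Type*} [MeasurableSpace E]
    (G : E → ℝ) (μ : Measure E) : Measure E :=
  (ENNReal.ofReal (∫ x, G x ∂μ))⁻¹ • μ.withDensity (fun x => ENNReal.ofReal (G x))

lemma indicator_add_mul_sub_mem_Icc {α : Type*} {G : α → ℝ} {C t : ℝ}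
    (hG : ∀ x, G x ∈ Set.Icc 0 C) (ht : t ∈ Set.Icc 0 1) (A : Set α) (x : α) :
    A.indicator G x + t * (C - G x) ∈ Set.Icc 0 C := by
  obtain ⟨hG0, hGC⟩ := hG x
  by_cases hx : x ∈ A
  · rw [Set.indicator_of_mem hx]
    constructor <;> nlinarith [ht.1, ht.2]
  · rw [Set.indicator_of_notMem hx]
    constructor <;> nlinarith [ht.1, ht.2]

section

variable {E : Type*} [MeasurableSpace E]

section TotalVariation

variable (μ ν : Measure E) [IsFiniteMeasure μ] [IsFiniteMeasure ν]

lemma abs_measureReal_sub_le_tvDist {A : Set E} (hA : MeasurableSet A) :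
    |μ.real A - ν.real A| ≤ tvDist μ ν := by
  have hbdd : BddAbove (Set.range fun B : Set E =>
      ⨆ (_ : MeasurableSet B), |μ.real B - ν.real B|) := by
    refine ⟨μ.real Set.univ + ν.real Set.univ, ?_⟩
    rintro _ ⟨B, rfl⟩
    refine Real.iSup_le (fun _ => ?_) (by positivity)
    have hμB : μ.real B ≤ μ.real Set.univ := measureReal_mono (Set.subset_univ B)
    have hνB : ν.real B ≤ ν.real Set.univ := measureReal_mono (Set.subset_univ B)
    rw [abs_sub_le_iff]
    constructor <;> linarith [measureReal_nonneg (μ := μ) (s := B),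
      measureReal_nonneg (μ := ν) (s := B)]
  have : Nonempty (MeasurableSet A) := ⟨hA⟩
  exact ciSup_const.symm.le.trans (le_ciSup hbdd A)

lemma tvDist_nonneg : 0 ≤ tvDist μ ν :=
  (abs_nonneg _).trans (abs_measureReal_sub_le_tvDist μ ν MeasurableSet.empty)

end TotalVariation

lemma tvDist_comm (μ ν : Measure E) : tvDist μ ν = tvDist ν μ := by
  simp only [tvDist, abs_sub_comm]

lemma tvDist_le_of_forall_abs_le {μ ν : Measure E} {r : ℝ}
    (h : ∀ A, MeasurableSet A → |μ.real A - ν.real A| ≤ r) : tvDist μ ν ≤ r :=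
  have hr : 0 ≤ r := (abs_nonneg _).trans (h ∅ MeasurableSet.empty)
  Real.iSup_le (fun A => Real.iSup_le (h A) hr) hr

lemma integrableOn_measureReal_setOf_le_Ioc (μ : Measure E) [IsFiniteMeasure μ] (g : E → ℝ)
    (K : ℝ) : IntegrableOn (fun s : ℝ => μ.real {x | s ≤ g x}) (Set.Ioc 0 K) :=
  have hanti : Antitone fun s : ℝ => μ.real {x | s ≤ g x} :=
    fun _ _ hst => measureReal_mono fun _ hx => hst.trans hx
  (hanti.intervalIntegrable (a := 0) (b := K)).1

lemma integral_sub_integral_le_mul_tvDist (μ ν : Measure E) [IsFiniteMeasure μ]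
    [IsFiniteMeasure ν] {g : E → ℝ} (hg : Measurable g) {K : ℝ} (hK : 0 ≤ K)
    (hgK : ∀ x, g x ∈ Set.Icc 0 K) :
    ∫ x, g x ∂μ - ∫ x, g x ∂ν ≤ K * tvDist μ ν := by
  have layerCake : ∀ (ρ : Measure E) [IsFiniteMeasure ρ],
      ∫ x, g x ∂ρ = ∫ s in Set.Ioc 0 K, ρ.real {x | s ≤ g x} := fun ρ _ =>
    (Integrable.of_mem_Icc 0 K hg.aemeasurable (.of_forall hgK)).integral_eq_integral_Ioc_meas_le
      (.of_forall fun x => (hgK x).1) (.of_forall fun x => (hgK x).2)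
  rw [layerCake μ, layerCake ν, ← integral_sub (integrableOn_measureReal_setOf_le_Ioc μ g K)
    (integrableOn_measureReal_setOf_le_Ioc ν g K)]
  calc ∫ s in Set.Ioc 0 K, (μ.real {x | s ≤ g x} - ν.real {x | s ≤ g x})
      ≤ ∫ _ in Set.Ioc 0 K, tvDist μ ν :=
        setIntegral_mono_on ((integrableOn_measureReal_setOf_le_Ioc μ g K).sub
          (integrableOn_measureReal_setOf_le_Ioc ν g K)) (integrableOn_const (by simp) (by simp))
          measurableSet_Ioc fun s _ => (le_abs_self _).trans
            (abs_measureReal_sub_le_tvDist μ ν (hg measurableSet_Ici))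
    _ = K * tvDist μ ν := by
        rw [setIntegral_const, Real.volume_real_Ioc_of_le hK, sub_zero, smul_eq_mul]

lemma boltzmannGibbs_real_apply {G : E → ℝ} {μ : Measure E} (hGi : Integrable G μ)
    (hG_nonneg : 0 ≤ᵐ[μ] G) {A : Set E} (hA : MeasurableSet A) :
    (boltzmannGibbs G μ).real A = (∫ x in A, G x ∂μ) / ∫ x, G x ∂μ := by
  rw [measureReal_def, boltzmannGibbs, Measure.smul_apply, smul_eq_mul, withDensity_apply _ hA,
    ← ofReal_integral_eq_lintegral_ofReal hGi.integrableOn (ae_restrict_of_ae hG_nonneg),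
    ENNReal.toReal_mul, ENNReal.toReal_inv, ENNReal.toReal_ofReal (integral_nonneg_of_ae hG_nonneg),
    ENNReal.toReal_ofReal (integral_nonneg_of_ae (ae_restrict_of_ae hG_nonneg)), div_eq_inv_mul]

lemma integral_indicator_add_mul_sub (ρ : Measure E) [IsProbabilityMeasure ρ] {G : E → ℝ}
    (hG : Integrable G ρ) {A : Set E} (hA : MeasurableSet A) (t C : ℝ) :
    ∫ x, A.indicator G x + t * (C - G x) ∂ρ = (∫ x in A, G x ∂ρ) + t * (C - ∫ x, G x ∂ρ) := by
  have h_sub : Integrable (fun x => C - G x) ρ := (integrable_const C).sub hG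
  rw [integral_add (hG.indicator hA) (h_sub.const_mul t), integral_indicator hA,
    integral_const_mul, integral_sub (integrable_const C) hG, integral_const, probReal_univ,
    one_smul]

lemma boltzmannGibbs_real_sub_le_div_mul_tvDist {G : E → ℝ} (hGm : Measurable G) {c C : ℝ}
    (hc : 0 < c) (hG : ∀ x, c ≤ G x ∧ G x ≤ C) (μ ν : Measure E) [IsProbabilityMeasure μ]
    [IsProbabilityMeasure ν] {A : Set E} (hA : MeasurableSet A) :
    (boltzmannGibbs G μ).real A - (boltzmannGibbs G ν).real A ≤ C / c * tvDist μ ν := by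
  have hG_mem : ∀ x, G x ∈ Set.Icc 0 C := fun x => ⟨hc.le.trans (hG x).1, (hG x).2⟩
  have hGi : ∀ (ρ : Measure E) [IsProbabilityMeasure ρ], Integrable G ρ := fun ρ _ =>
    .of_mem_Icc c C hGm.aemeasurable (.of_forall hG)
  have hc_le : ∀ (ρ : Measure E) [IsProbabilityMeasure ρ], c ≤ ∫ x, G x ∂ρ := fun ρ _ => by
    simpa using integral_mono (integrable_const c) (hGi ρ) fun x => (hG x).1
  have hG_nonneg : ∀ (ρ : Measure E), 0 ≤ᵐ[ρ] G := fun ρ => .of_forall fun x => (hG_mem x).1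
  have hμ_pos : 0 < ∫ x, G x ∂μ := hc.trans_le (hc_le μ)
  set t := (∫ x in A, G x ∂μ) / ∫ x, G x ∂μ with ht
  have ht_mul : t * ∫ x, G x ∂μ = ∫ x in A, G x ∂μ := div_mul_cancel₀ _ hμ_pos.ne'
  have ht_mem : t ∈ Set.Icc 0 1 :=
    ⟨div_nonneg (integral_nonneg_of_ae (hG_nonneg _)) hμ_pos.le,
      div_le_one_of_le₀ (setIntegral_le_integral (hGi μ) (hG_nonneg μ)) hμ_pos.le⟩
  have hC : 0 ≤ C := (hG_mem (nonempty_of_isProbabilityMeasure μ).some).1.trans (hG_mem _).2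
  have hf_le : (∫ x, A.indicator G x + t * (C - G x) ∂μ) -
      ∫ x, A.indicator G x + t * (C - G x) ∂ν ≤ C * tvDist μ ν :=
    integral_sub_integral_le_mul_tvDist μ ν
      ((hGm.indicator hA).add ((measurable_const.sub hGm).const_mul t)) hC
      (indicator_add_mul_sub_mem_Icc hG_mem ht_mem A)
  have hν_pos : 0 < ∫ x, G x ∂ν := hc.trans_le (hc_le ν)
  calc (boltzmannGibbs G μ).real A - (boltzmannGibbs G ν).real A
      = ((∫ x, A.indicator G x + t * (C - G x) ∂μ) -
          ∫ x, A.indicator G x + t * (C - G x) ∂ν) / ∫ x, G x ∂ν := by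
        rw [boltzmannGibbs_real_apply (hGi μ) (hG_nonneg μ) hA,
          boltzmannGibbs_real_apply (hGi ν) (hG_nonneg ν) hA, integral_indicator_add_mul_sub μ
          (hGi μ) hA, integral_indicator_add_mul_sub ν (hGi ν) hA, ← ht]
        field_simp
        linear_combination ht_mul
    _ ≤ C * tvDist μ ν / ∫ x, G x ∂ν := div_le_div_of_nonneg_right hf_le hν_pos.le
    _ ≤ C * tvDist μ ν / c :=
        div_le_div_of_nonneg_left (mul_nonneg hC (tvDist_nonneg μ ν)) hc (hc_le ν)
    _ = C / c * tvDist μ ν := by ring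

end

/-- stability of the Boltzmann–Gibbs reweighting map.
If `0 < c ≤ G ≤ C`, then for any probability measures `μ, ν`,
`‖Ψ(μ) − Ψ(ν)‖_TV ≤ (C/c) ‖μ − ν‖_TV`. -/
theorem boltzmannGibbs_tv_stability
    {E : Type*} [MeasurableSpace E]
    (G : E → ℝ) (hGmeas : Measurable G)
    (c C : ℝ) (hc : 0 < c) (hG : ∀ x : E, c ≤ G x ∧ G x ≤ C)
    (μ ν : Measure E) [IsProbabilityMeasure μ] [IsProbabilityMeasure ν] :
    tvDist (boltzmannGibbs G μ) (boltzmannGibbs G ν) ≤ (C / c) * tvDist μ ν := by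
  refine tvDist_le_of_forall_abs_le fun A hA => abs_sub_le_iff.2 ⟨?_, ?_⟩
  · exact boltzmannGibbs_real_sub_le_div_mul_tvDist hGmeas hc hG μ ν hA
  · rw [tvDist_comm μ ν]
    exact boltzmannGibbs_real_sub_le_div_mul_tvDist hGmeas hc hG ν μ hA
end
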